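/- With the same training data, architecture and loss J as in the concrete Theorem 1 setting (state network with a common activation in its final layer, output network, parameter θ consisting of all weights, biases and the initial state, trajectory x_k(θ), predictions ŷ_k(θ), state sample variances V_i(θ)): for every parameter θ there exists a parameter θ̃ of the same architecture such that (i) J(θ̃) ≤ J(θ), (ii) the state sample variances of θ̃ are decreasingly ordered, V_1(θ̃) ≥ V_2(θ̃) ≥ ⋯ ≥ V_d(θ̃), and (iii) the predicted outputs are unchanged, ŷ_k(θ̃) = ŷ_k(θ) for all 0 ≤ k ≤ N−1. -/

import Mathlib

open Finset

/-- One layer of a layered neural network: `v ↦ (j ↦ φ j ((A v + b) j))`. -/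
noncomputable def layerMap {a c : ℕ} (A : Matrix (Fin c) (Fin a) ℝ) (bv : Fin c → ℝ)
    (φ : Fin c → ℝ → ℝ) (v : Fin a → ℝ) : Fin c → ℝ :=
  fun j => φ j ((A.mulVec v + bv) j)

/-- Forward map of `L` consecutive layers with dimensions `l 0 → l 1 → ⋯ → l L`,
weight matrices `A i`, biases `b i` and node activations `φ i`. -/
noncomputable def netFwd (l : ℕ → ℕ) (A : ∀ i, Matrix (Fin (l (i + 1))) (Fin (l i)) ℝ)
    (b : ∀ i, Fin (l (i + 1)) → ℝ) (φ : ∀ i, Fin (l (i + 1)) → ℝ → ℝ) :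
    (L : ℕ) → (Fin (l 0) → ℝ) → Fin (l L) → ℝ
  | 0, v => v
  | (L + 1), v => layerMap (A L) (b L) (φ L) (netFwd l A b φ L v)

/-- The trainable parameters of the SSNNO architecture: all weight matrices and
biases of the state network (first layer `ℝ^{d+m} → ℝ^{lh 0}`, `Mid` middle layers
along the dimensions `lh`, last layer `ℝ^{lh Mid} → ℝ^d`, so `L = Mid + 2 ≥ 2`
layers in total), all weight matrices and biases of the output network
(first layer `ℝ^d → ℝ^{gh 0}`, then `Hg` further layers along `gh`, ending in
dimension `p = gh Hg`, so `H = Hg + 1 ≥ 1` layers), and the initial state `x₀`. -/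
structure SSNNOParams (d m Mid : ℕ) (lh : ℕ → ℕ) (Hg : ℕ) (gh : ℕ → ℕ) where
  A1 : Matrix (Fin (lh 0)) (Fin (d + m)) ℝ
  b1 : Fin (lh 0) → ℝ
  A : ∀ i : ℕ, Matrix (Fin (lh (i + 1))) (Fin (lh i)) ℝ
  b : ∀ i : ℕ, Fin (lh (i + 1)) → ℝ
  AL : Matrix (Fin d) (Fin (lh Mid)) ℝ
  bL : Fin d → ℝ
  Ag1 : Matrix (Fin (gh 0)) (Fin d) ℝ
  bg1 : Fin (gh 0) → ℝ
  Ag : ∀ i : ℕ, Matrix (Fin (gh (i + 1))) (Fin (gh i)) ℝ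
  bg : ∀ i : ℕ, Fin (gh (i + 1)) → ℝ
  x0 : Fin d → ℝ

/-- The state network `f_NN` of the SSNNO: first layer with activations `φ1`,
middle layers with activations `φ`, and a last layer using one common activation
`φL` for all `d` output nodes. -/
noncomputable def fNNp {d m Mid : ℕ} {lh : ℕ → ℕ} {Hg : ℕ} {gh : ℕ → ℕ}
    (φ1 : Fin (lh 0) → ℝ → ℝ) (φ : ∀ i, Fin (lh (i + 1)) → ℝ → ℝ) (φL : ℝ → ℝ)
    (θ : SSNNOParams d m Mid lh Hg gh) (x : Fin d → ℝ) (u : Fin m → ℝ) :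
    Fin d → ℝ :=
  fun j => φL ((θ.AL.mulVec
    (netFwd lh θ.A θ.b φ Mid (layerMap θ.A1 θ.b1 φ1 (Fin.append x u))) + θ.bL) j)

/-- The output network `g_NN` of the SSNNO, with `Hg + 1` layers and output
dimension `p = gh Hg`. -/
noncomputable def gNNp {d m Mid : ℕ} {lh : ℕ → ℕ} {Hg : ℕ} {gh : ℕ → ℕ}
    (ψ1 : Fin (gh 0) → ℝ → ℝ) (ψ : ∀ i, Fin (gh (i + 1)) → ℝ → ℝ)
    (θ : SSNNOParams d m Mid lh Hg gh) (x : Fin d → ℝ) : Fin (gh Hg) → ℝ :=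
  netFwd gh θ.Ag θ.bg ψ Hg (layerMap θ.Ag1 θ.bg1 ψ1 x)

/-- The state trajectory of the SSNNO: `x_0(θ) = θ.x0`,
`x_{k+1}(θ) = f_NN(x_k(θ), u_k)`. -/
noncomputable def xtrajP {d m Mid : ℕ} {lh : ℕ → ℕ} {Hg : ℕ} {gh : ℕ → ℕ}
    (φ1 : Fin (lh 0) → ℝ → ℝ) (φ : ∀ i, Fin (lh (i + 1)) → ℝ → ℝ) (φL : ℝ → ℝ)
    (u : ℕ → Fin m → ℝ) (θ : SSNNOParams d m Mid lh Hg gh) : ℕ → Fin d → ℝ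
  | 0 => θ.x0
  | (k + 1) => fNNp φ1 φ φL θ (xtrajP φ1 φ φL u θ k) (u k)

/-- The sample mean of the first `N` states of the SSNNO trajectory. -/
noncomputable def xbarP {d m Mid : ℕ} {lh : ℕ → ℕ} {Hg : ℕ} {gh : ℕ → ℕ}
    (φ1 : Fin (lh 0) → ℝ → ℝ) (φ : ∀ i, Fin (lh (i + 1)) → ℝ → ℝ) (φL : ℝ → ℝ)
    (N : ℕ) (u : ℕ → Fin m → ℝ) (θ : SSNNOParams d m Mid lh Hg gh) :
    Fin d → ℝ :=
  (N : ℝ)⁻¹ • ∑ k ∈ Finset.range N, xtrajP φ1 φ φL u θ k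

/-- The sample variance of coordinate `i` of the first `N` states of the SSNNO
trajectory. -/
noncomputable def varP {d m Mid : ℕ} {lh : ℕ → ℕ} {Hg : ℕ} {gh : ℕ → ℕ}
    (φ1 : Fin (lh 0) → ℝ → ℝ) (φ : ∀ i, Fin (lh (i + 1)) → ℝ → ℝ) (φL : ℝ → ℝ)
    (N : ℕ) (u : ℕ → Fin m → ℝ) (θ : SSNNOParams d m Mid lh Hg gh)
    (i : Fin d) : ℝ :=
  ((N : ℝ) - 1)⁻¹ *
    ∑ k ∈ Finset.range N, (xtrajP φ1 φ φL u θ k i - xbarP φ1 φ φL N u θ i) ^ 2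

/-- The SSNNO training loss
`J(θ) = ∑_k ‖y_k − ŷ_k(θ)‖² + α·∑_i w_i·∑_k (x_k(θ)_i − x̄(θ)_i)²`
`      + β·(sum of squares of all output-network weights and biases)`. -/
noncomputable def lossP {d m Mid : ℕ} {lh : ℕ → ℕ} {Hg : ℕ} {gh : ℕ → ℕ}
    (φ1 : Fin (lh 0) → ℝ → ℝ) (φ : ∀ i, Fin (lh (i + 1)) → ℝ → ℝ) (φL : ℝ → ℝ)
    (ψ1 : Fin (gh 0) → ℝ → ℝ) (ψ : ∀ i, Fin (gh (i + 1)) → ℝ → ℝ)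
    (N : ℕ) (u : ℕ → Fin m → ℝ) (y : ℕ → Fin (gh Hg) → ℝ)
    (α β : ℝ) (w : Fin d → ℝ)
    (θ : SSNNOParams d m Mid lh Hg gh) : ℝ :=
  (∑ k ∈ Finset.range N, ∑ j, (y k j - gNNp ψ1 ψ θ (xtrajP φ1 φ φL u θ k) j) ^ 2)
  + α * ∑ i, w i *
      (∑ k ∈ Finset.range N, (xtrajP φ1 φ φL u θ k i - xbarP φ1 φ φL N u θ i) ^ 2)
  + β * ((∑ j, ∑ i, (θ.Ag1 j i) ^ 2) + (∑ j, (θ.bg1 j) ^ 2)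
      + ∑ t ∈ Finset.range Hg, ((∑ j, ∑ i, (θ.Ag t j i) ^ 2) + ∑ j, (θ.bg t j) ^ 2))

/-!
Relabelling the state coordinates by a permutation `σ` (rows of the last state layer and its
bias, the state columns of the first state layer and of the first output layer, the initial
state) permutes every state of the trajectory by `σ`, because the last state layer applies
one common activation to all nodes. The predictions and the output-network penalty are
unchanged, and only the variance penalty `α ∑ᵢ wᵢ Sᵢ` sees the permutation. Choosing `σ` to
sort the `Sᵢ` decreasingly minimises it by the rearrangement inequality, since `w` is
increasing.
-/

theorem antitone_comp_sort_toDual {n : ℕ} {α : Type*} [LinearOrder α] (f : Fin n → α) :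
    Antitone (f ∘ Tuple.sort (OrderDual.toDual ∘ f)) :=
  monotone_toDual_comp_iff.mp (Tuple.monotone_sort _)

theorem Monotone.sum_mul_comp_sort_toDual_le {n : ℕ} {α : Type*} [Semiring α] [LinearOrder α]
    [IsStrictOrderedRing α] [ExistsAddOfLE α] {w : Fin n → α} (hw : Monotone w) (f : Fin n → α) :
    ∑ i, w i * f (Tuple.sort (OrderDual.toDual ∘ f) i) ≤ ∑ i, w i * f i := by
  simpa using (hw.antivary (antitone_comp_sort_toDual f)).sum_mul_le_sum_mul_comp_perm
    (σ := (Tuple.sort (OrderDual.toDual ∘ f))⁻¹)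

theorem Fin.append_comp_sumCongr {d m : ℕ} {α : Type*} (σ : Equiv.Perm (Fin d))
    (x : Fin d → α) (v : Fin m → α) :
    Fin.append (x ∘ σ) v =
      Fin.append x v ∘ finSumFinEquiv.permCongr (σ.sumCongr (Equiv.refl (Fin m))) := by
  funext i
  refine Fin.addCases (fun a => ?_) (fun a => ?_) i <;> simp [Equiv.permCongr_apply]

theorem layerMap_submatrix_comp {a c : ℕ} (A : Matrix (Fin c) (Fin a) ℝ) (bv : Fin c → ℝ)
    (φ : Fin c → ℝ → ℝ) (e : Equiv.Perm (Fin a)) (v : Fin a → ℝ) :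
    layerMap (A.submatrix id e) bv φ (v ∘ e) = layerMap A bv φ v := by
  unfold layerMap
  rw [Matrix.submatrix_mulVec_equiv]
  simp [Function.comp_def]

namespace SSNNOParams

variable {d m Mid : ℕ} {lh : ℕ → ℕ} {Hg : ℕ} {gh : ℕ → ℕ}
  (φ1 : Fin (lh 0) → ℝ → ℝ) (φ : ∀ i, Fin (lh (i + 1)) → ℝ → ℝ) (φL : ℝ → ℝ)
  (ψ1 : Fin (gh 0) → ℝ → ℝ) (ψ : ∀ i, Fin (gh (i + 1)) → ℝ → ℝ)
  (N : ℕ) (u : ℕ → Fin m → ℝ)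

noncomputable def permute (θ : SSNNOParams d m Mid lh Hg gh) (σ : Equiv.Perm (Fin d)) :
    SSNNOParams d m Mid lh Hg gh :=
  { θ with
    A1 := θ.A1.submatrix id (finSumFinEquiv.permCongr (σ.sumCongr (Equiv.refl (Fin m))))
    AL := θ.AL.submatrix σ id
    bL := θ.bL ∘ σ
    Ag1 := θ.Ag1.submatrix id σ
    x0 := θ.x0 ∘ σ }

variable (θ : SSNNOParams d m Mid lh Hg gh) (σ : Equiv.Perm (Fin d))

theorem fNNp_permute (x : Fin d → ℝ) (v : Fin m → ℝ) :
    fNNp φ1 φ φL (θ.permute σ) (x ∘ σ) v = fNNp φ1 φ φL θ x v ∘ σ := by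
  funext j
  simp only [Function.comp_apply, fNNp, permute, Fin.append_comp_sumCongr,
    layerMap_submatrix_comp]
  simp [Matrix.mulVec, dotProduct]

theorem gNNp_permute (x : Fin d → ℝ) :
    gNNp ψ1 ψ (θ.permute σ) (x ∘ σ) = gNNp ψ1 ψ θ x := by
  simp only [gNNp, permute, layerMap_submatrix_comp]

theorem xtrajP_permute (k : ℕ) :
    xtrajP φ1 φ φL u (θ.permute σ) k = xtrajP φ1 φ φL u θ k ∘ σ := by
  induction k with
  | zero => rfl
  | succ k ih => simp only [xtrajP, ih, fNNp_permute]

theorem xbarP_permute : xbarP φ1 φ φL N u (θ.permute σ) = xbarP φ1 φ φL N u θ ∘ σ := by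
  funext i
  simp [xbarP, xtrajP_permute]

noncomputable def sqDevP (i : Fin d) : ℝ :=
  ∑ k ∈ Finset.range N, (xtrajP φ1 φ φL u θ k i - xbarP φ1 φ φL N u θ i) ^ 2

theorem sqDevP_permute : sqDevP φ1 φ φL N u (θ.permute σ) = sqDevP φ1 φ φL N u θ ∘ σ := by
  funext i
  simp [sqDevP, xtrajP_permute, xbarP_permute]

theorem varP_eq_sqDevP (i : Fin d) :
    varP φ1 φ φL N u θ i = ((N : ℝ) - 1)⁻¹ * sqDevP φ1 φ φL N u θ i :=
  rfl

theorem lossP_permute (y : ℕ → Fin (gh Hg) → ℝ) (α β : ℝ) (w : Fin d → ℝ) :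
    lossP φ1 φ φL ψ1 ψ N u y α β w (θ.permute σ) =
      lossP φ1 φ φL ψ1 ψ N u y α β w θ +
        α * (∑ i, w i * sqDevP φ1 φ φL N u θ (σ i) - ∑ i, w i * sqDevP φ1 φ φL N u θ i) := by
  have hpred (k : ℕ) : gNNp ψ1 ψ (θ.permute σ) (xtrajP φ1 φ φL u (θ.permute σ) k) =
      gNNp ψ1 ψ θ (xtrajP φ1 φ φL u θ k) := by
    rw [xtrajP_permute, gNNp_permute]
  have hreg : ∑ j, ∑ i, ((θ.permute σ).Ag1 j i) ^ 2 = ∑ j, ∑ i, (θ.Ag1 j i) ^ 2 :=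
    Finset.sum_congr rfl fun j _ => Equiv.sum_comp σ fun i => (θ.Ag1 j i) ^ 2
  have hdev := sqDevP_permute φ1 φ φL N u θ σ
  simp only [sqDevP, funext_iff, Function.comp_apply] at hdev
  simp only [lossP, hpred, hreg, hdev, sqDevP]
  simp only [permute]
  ring

end SSNNOParams

theorem ssnno_variance_sorting_descent_general
    (d m Mid : ℕ) (lh : ℕ → ℕ) (Hg : ℕ) (gh : ℕ → ℕ)
    (φ1 : Fin (lh 0) → ℝ → ℝ) (φ : ∀ i, Fin (lh (i + 1)) → ℝ → ℝ) (φL : ℝ → ℝ)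
    (ψ1 : Fin (gh 0) → ℝ → ℝ) (ψ : ∀ i, Fin (gh (i + 1)) → ℝ → ℝ)
    (N : ℕ) (hN : 2 ≤ N)
    (u : ℕ → Fin m → ℝ) (y : ℕ → Fin (gh Hg) → ℝ)
    (α β : ℝ) (hα : 0 < α)
    (w : Fin d → ℝ) (hw : StrictMono w) :
    ∀ θ : SSNNOParams d m Mid lh Hg gh,
      ∃ θt : SSNNOParams d m Mid lh Hg gh,
        lossP φ1 φ φL ψ1 ψ N u y α β w θt ≤ lossP φ1 φ φL ψ1 ψ N u y α β w θ ∧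
        (∀ i j : Fin d, i ≤ j → varP φ1 φ φL N u θt j ≤ varP φ1 φ φL N u θt i) ∧
        (∀ k < N, gNNp ψ1 ψ θt (xtrajP φ1 φ φL u θt k) =
          gNNp ψ1 ψ θ (xtrajP φ1 φ φL u θ k)) := by
  intro θ
  set S := SSNNOParams.sqDevP φ1 φ φL N u θ
  set σ := Tuple.sort (OrderDual.toDual ∘ S)
  refine ⟨θ.permute σ, ?_, fun i j hij => ?_, fun k _ => ?_⟩
  · rw [SSNNOParams.lossP_permute, add_le_iff_nonpos_right]
    exact mul_nonpos_of_nonneg_of_nonpos hα.le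
      (sub_nonpos.mpr (hw.monotone.sum_mul_comp_sort_toDual_le S))
  · have hN1 : (0 : ℝ) ≤ (N : ℝ) - 1 := sub_nonneg.mpr (by exact_mod_cast (by omega : 1 ≤ N))
    simp only [SSNNOParams.varP_eq_sqDevP, SSNNOParams.sqDevP_permute]
    exact mul_le_mul_of_nonneg_left (antitone_comp_sort_toDual S hij) (inv_nonneg.mpr hN1)
  · rw [SSNNOParams.xtrajP_permute, SSNNOParams.gNNp_permute]

/-- descent guarantee, Eq. (41), behind Algorithm 1.
In the concrete Theorem 1 setting, for every parameter `θ` there exists a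
parameter `θ̃` of the same architecture such that (i) the loss does not increase,
`J(θ̃) ≤ J(θ)`, (ii) the state sample variances of `θ̃` are decreasingly ordered,
and (iii) the predicted outputs are unchanged: `ŷ_k(θ̃) = ŷ_k(θ)` for all
`0 ≤ k ≤ N − 1`. -/
theorem ssnno_variance_sorting_descent
    (d m Mid : ℕ) (hd : 1 ≤ d) (lh : ℕ → ℕ) (Hg : ℕ) (gh : ℕ → ℕ)
    (φ1 : Fin (lh 0) → ℝ → ℝ) (φ : ∀ i, Fin (lh (i + 1)) → ℝ → ℝ) (φL : ℝ → ℝ)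
    (ψ1 : Fin (gh 0) → ℝ → ℝ) (ψ : ∀ i, Fin (gh (i + 1)) → ℝ → ℝ)
    (N : ℕ) (hN : 2 ≤ N)
    (u : ℕ → Fin m → ℝ) (y : ℕ → Fin (gh Hg) → ℝ)
    (α β : ℝ) (hα : 0 < α) (hβ : 0 < β)
    (w : Fin d → ℝ) (hw0 : 0 ≤ w ⟨0, hd⟩) (hw : StrictMono w) :
    ∀ θ : SSNNOParams d m Mid lh Hg gh,
      ∃ θt : SSNNOParams d m Mid lh Hg gh,
        lossP φ1 φ φL ψ1 ψ N u y α β w θt ≤ lossP φ1 φ φL ψ1 ψ N u y α β w θ ∧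
        (∀ i j : Fin d, i ≤ j → varP φ1 φ φL N u θt j ≤ varP φ1 φ φL N u θt i) ∧
        (∀ k < N, gNNp ψ1 ψ θt (xtrajP φ1 φ φL u θt k) =
          gNNp ψ1 ψ θ (xtrajP φ1 φ φL u θ k)) :=
  ssnno_variance_sorting_descent_general d m Mid lh Hg gh φ1 φ φL ψ1 ψ N hN u y α β hα w hw
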